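/- arXiv:2401.05292 — 2 statements merged into one kernel-verified Lean document; each statement's English description precedes it below -/
import Mathlib

section
/- In the setting of the product-space skew-plus-Lipschitz operator: if Q is μ₀-Lipschitz and each Qᵢ is μᵢ-Lipschitz, then the operator S(x, v₁,…,vₘ) = (Qx + Σᵢ Lᵢ*vᵢ, Q₁v₁ − L₁x, …, Qₘvₘ − Lₘx) on K = H ⊕ G₁ ⊕ ⋯ ⊕ Gₘ is μ-Lipschitz with μ = sqrt(Σᵢ ‖Lᵢ‖²) + max₀≤i≤m μᵢ. -/
open scoped RealInnerProductSpace

-- Minkowski inequality for finite sums of squares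
lemma minkowski_fin {n : ℕ} (f g : Fin n → ℝ) :
    Real.sqrt (∑ j, (f j + g j) ^ 2)
      ≤ Real.sqrt (∑ j, f j ^ 2) + Real.sqrt (∑ j, g j ^ 2) := by
  set A := Real.sqrt (∑ j, f j ^ 2) with hA
  set B := Real.sqrt (∑ j, g j ^ 2) with hB
  have hA0 : 0 ≤ A := Real.sqrt_nonneg _
  have hB0 : 0 ≤ B := Real.sqrt_nonneg _
  have hfg : (∑ j, f j * g j) ≤ A * B := by
    have h1 : (∑ j, f j * g j) ≤ |∑ j, f j * g j| := le_abs_self _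
    have h2 : |∑ j, f j * g j| = Real.sqrt ((∑ j, f j * g j) ^ 2) := (Real.sqrt_sq_eq_abs _).symm
    have h3 : Real.sqrt ((∑ j, f j * g j) ^ 2)
        ≤ Real.sqrt ((∑ j, f j ^ 2) * ∑ j, g j ^ 2) :=
      Real.sqrt_le_sqrt (Finset.sum_mul_sq_le_sq_mul_sq _ _ _)
    have h4 : Real.sqrt ((∑ j, f j ^ 2) * ∑ j, g j ^ 2) = A * B :=
      Real.sqrt_mul (Finset.sum_nonneg fun _ _ => sq_nonneg _) _
    linarith
  have key : (∑ j, (f j + g j) ^ 2) ≤ (A + B) ^ 2 := by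
    have hAs : A ^ 2 = ∑ j, f j ^ 2 :=
      Real.sq_sqrt (Finset.sum_nonneg fun _ _ => sq_nonneg _)
    have hBs : B ^ 2 = ∑ j, g j ^ 2 :=
      Real.sq_sqrt (Finset.sum_nonneg fun _ _ => sq_nonneg _)
    have expand : (∑ j, (f j + g j) ^ 2)
        = (∑ j, f j ^ 2) + 2 * (∑ j, f j * g j) + ∑ j, g j ^ 2 := by
      rw [Finset.mul_sum, ← Finset.sum_add_distrib, ← Finset.sum_add_distrib]
      exact Finset.sum_congr rfl fun j _ => by ring
    nlinarith [mul_nonneg hA0 hB0]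
  calc Real.sqrt (∑ j, (f j + g j) ^ 2) ≤ Real.sqrt ((A + B) ^ 2) := Real.sqrt_le_sqrt key
    _ = A + B := Real.sqrt_sq (by linarith)

set_option maxHeartbeats 1000000

theorem skew_operator_lipschitz {H : Type*} [NormedAddCommGroup H] [InnerProductSpace ℝ H]
    [CompleteSpace H] {m : ℕ} (G : Fin m → Type*) [∀ i, NormedAddCommGroup (G i)]
    [∀ i, InnerProductSpace ℝ (G i)] [∀ i, CompleteSpace (G i)]
    (Q : H → H) (Qi : ∀ i, G i → G i) (L : ∀ i, H →L[ℝ] G i)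
    (μ₀ : ℝ) (μi : Fin m → ℝ)
    (hQ : ∀ x y : H, ‖Q x - Q y‖ ≤ μ₀ * ‖x - y‖)
    (hQi : ∀ i, ∀ u v : G i, ‖Qi i u - Qi i v‖ ≤ μi i * ‖u - v‖) :
    ∀ (x y : H) (v w : ∀ i, G i),
      Real.sqrt (‖(Q x + ∑ i, (L i).adjoint (v i)) - (Q y + ∑ i, (L i).adjoint (w i))‖ ^ 2 +
          ∑ i, ‖(Qi i (v i) - L i x) - (Qi i (w i) - L i y)‖ ^ 2)
        ≤ (Real.sqrt (∑ i, ‖L i‖ ^ 2) + max μ₀ (⨆ i, μi i)) *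
            Real.sqrt (‖x - y‖ ^ 2 + ∑ i, ‖v i - w i‖ ^ 2) := by
  intro x y v w
  set M : ℝ := max μ₀ (⨆ i, μi i) with hM
  set c : ℝ := Real.sqrt (∑ i, ‖L i‖ ^ 2) with hc
  have hc0 : 0 ≤ c := Real.sqrt_nonneg _
  set a : H := x - y with ha
  set b : ∀ i, G i := fun i => v i - w i with hb
  -- rewrite differences
  have hu0 : (Q x + ∑ i, (L i).adjoint (v i)) - (Q y + ∑ i, (L i).adjoint (w i))
      = (Q x - Q y) + ∑ i, (L i).adjoint (b i) := by
    simp only [hb, map_sub]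
    rw [Finset.sum_sub_distrib]
    abel
  have hui : ∀ i, (Qi i (v i) - L i x) - (Qi i (w i) - L i y)
      = (Qi i (v i) - Qi i (w i)) - L i a := by
    intro i; simp only [ha, map_sub]; abel
  have hμ0M : μ₀ ≤ M := le_max_left _ _
  have hμiM : ∀ i, μi i ≤ M := fun i =>
    le_trans (le_ciSup (Set.Finite.bddAbove (Set.finite_range μi)) i) (le_max_right _ _)
  -- componentwise bounds
  set p : Fin (m + 1) → ℝ := Fin.cons ‖∑ i, (L i).adjoint (b i)‖ (fun i => ‖L i a‖) with hp
  set q : Fin (m + 1) → ℝ := Fin.cons (M * ‖a‖) (fun i => M * ‖b i‖) with hq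
  have hcomp0 : ‖(Q x - Q y) + ∑ i, (L i).adjoint (b i)‖ ≤ p 0 + q 0 := by
    simp only [hp, hq, Fin.cons_zero]
    calc ‖(Q x - Q y) + ∑ i, (L i).adjoint (b i)‖
        ≤ ‖Q x - Q y‖ + ‖∑ i, (L i).adjoint (b i)‖ := norm_add_le _ _
      _ ≤ M * ‖a‖ + ‖∑ i, (L i).adjoint (b i)‖ := by
          have := (hQ x y).trans (mul_le_mul_of_nonneg_right hμ0M (norm_nonneg _))
          linarith
      _ = _ := by ring
  have hcompi : ∀ i, ‖(Qi i (v i) - Qi i (w i)) - L i a‖ ≤ p i.succ + q i.succ := by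
    intro i
    simp only [hp, hq, Fin.cons_succ]
    calc ‖(Qi i (v i) - Qi i (w i)) - L i a‖
        ≤ ‖Qi i (v i) - Qi i (w i)‖ + ‖L i a‖ := norm_sub_le _ _
      _ ≤ M * ‖b i‖ + ‖L i a‖ := by
          have := (hQi i (v i) (w i)).trans
            (mul_le_mul_of_nonneg_right (hμiM i) (norm_nonneg _))
          linarith
      _ = _ := by ring
  -- LHS ≤ sqrt (∑ (p+q)^2)
  have step1 : Real.sqrt (‖(Q x + ∑ i, (L i).adjoint (v i)) -
        (Q y + ∑ i, (L i).adjoint (w i))‖ ^ 2 +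
        ∑ i, ‖(Qi i (v i) - L i x) - (Qi i (w i) - L i y)‖ ^ 2)
      ≤ Real.sqrt (∑ j, (p j + q j) ^ 2) := by
    apply Real.sqrt_le_sqrt
    rw [Fin.sum_univ_succ]
    apply add_le_add
    · rw [hu0]
      exact pow_le_pow_left₀ (norm_nonneg _) hcomp0 2
    · apply Finset.sum_le_sum
      intro i _
      rw [hui i]
      exact pow_le_pow_left₀ (norm_nonneg _) (hcompi i) 2
  -- bound the skew part
  have hP0 : (0:ℝ) ≤ ‖a‖ ^ 2 + ∑ i, ‖b i‖ ^ 2 :=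
    add_nonneg (sq_nonneg _) (Finset.sum_nonneg fun _ _ => sq_nonneg _)
  have step2 : Real.sqrt (∑ j, p j ^ 2) ≤ c * Real.sqrt (‖a‖ ^ 2 + ∑ i, ‖b i‖ ^ 2) := by
    have h1 : ‖∑ i, (L i).adjoint (b i)‖ ^ 2 ≤ (∑ i, ‖L i‖ ^ 2) * ∑ i, ‖b i‖ ^ 2 := by
      have hnorm : ‖∑ i, (L i).adjoint (b i)‖ ≤ ∑ i, ‖L i‖ * ‖b i‖ := by
        refine (norm_sum_le _ _).trans (Finset.sum_le_sum fun i _ => ?_)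
        calc ‖(L i).adjoint (b i)‖ ≤ ‖(L i).adjoint‖ * ‖b i‖ := (L i).adjoint.le_opNorm _
          _ = ‖L i‖ * ‖b i‖ := by rw [ContinuousLinearMap.adjoint.norm_map]
      calc ‖∑ i, (L i).adjoint (b i)‖ ^ 2 ≤ (∑ i, ‖L i‖ * ‖b i‖) ^ 2 :=
            pow_le_pow_left₀ (norm_nonneg _) hnorm 2
        _ ≤ (∑ i, ‖L i‖ ^ 2) * ∑ i, ‖b i‖ ^ 2 := Finset.sum_mul_sq_le_sq_mul_sq _ _ _
    have h2 : (∑ i, ‖L i a‖ ^ 2) ≤ (∑ i, ‖L i‖ ^ 2) * ‖a‖ ^ 2 := by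
      rw [Finset.sum_mul]
      refine Finset.sum_le_sum fun i _ => ?_
      calc ‖L i a‖ ^ 2 ≤ (‖L i‖ * ‖a‖) ^ 2 :=
            pow_le_pow_left₀ (norm_nonneg _) ((L i).le_opNorm a) 2
        _ = ‖L i‖ ^ 2 * ‖a‖ ^ 2 := by ring
    have hsum : (∑ j, p j ^ 2) ≤ (∑ i, ‖L i‖ ^ 2) * (‖a‖ ^ 2 + ∑ i, ‖b i‖ ^ 2) := by
      rw [Fin.sum_univ_succ]
      simp only [hp, Fin.cons_zero, Fin.cons_succ]
      nlinarith
    calc Real.sqrt (∑ j, p j ^ 2)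
        ≤ Real.sqrt ((∑ i, ‖L i‖ ^ 2) * (‖a‖ ^ 2 + ∑ i, ‖b i‖ ^ 2)) := Real.sqrt_le_sqrt hsum
      _ = c * Real.sqrt (‖a‖ ^ 2 + ∑ i, ‖b i‖ ^ 2) :=
          Real.sqrt_mul (Finset.sum_nonneg fun _ _ => sq_nonneg _) _
  -- bound the Lipschitz part
  have step3 : Real.sqrt (∑ j, q j ^ 2) ≤ M * Real.sqrt (‖a‖ ^ 2 + ∑ i, ‖b i‖ ^ 2) := by
    have hsum : (∑ j, q j ^ 2) = M ^ 2 * (‖a‖ ^ 2 + ∑ i, ‖b i‖ ^ 2) := by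
      rw [Fin.sum_univ_succ]
      simp only [hq, Fin.cons_zero, Fin.cons_succ, mul_pow]
      rw [mul_add, Finset.mul_sum]
    rcases le_or_gt 0 M with hM0 | hM0
    · rw [hsum, Real.sqrt_mul (sq_nonneg _), Real.sqrt_sq hM0]
    · -- M < 0: all norms are zero
      have hq0 : ∀ j, q j = 0 := by
        intro j
        have hqle : q j ≤ 0 := by
          refine Fin.cases ?_ ?_ j
          · simpa [hq] using mul_nonpos_of_nonpos_of_nonneg hM0.le (norm_nonneg a)
          · intro i
            simpa [hq] using mul_nonpos_of_nonpos_of_nonneg hM0.le (norm_nonneg (b i))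
        have hqge : 0 ≤ q j := by
          refine Fin.cases ?_ ?_ j
          · simp only [hq, Fin.cons_zero]
            have := (hQ x y).trans (mul_le_mul_of_nonneg_right hμ0M (norm_nonneg _))
            exact le_trans (norm_nonneg _) this
          · intro i
            simp only [hq, Fin.cons_succ]
            have := (hQi i (v i) (w i)).trans
              (mul_le_mul_of_nonneg_right (hμiM i) (norm_nonneg _))
            exact le_trans (norm_nonneg _) this
        linarith
      have hab : ‖a‖ = 0 ∧ ∀ i, ‖b i‖ = 0 := by
        constructor
        · have := hq0 0
          simp only [hq, Fin.cons_zero] at this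
          rcases mul_eq_zero.mp this with h | h
          · exact absurd h (ne_of_lt hM0)
          · exact h
        · intro i
          have := hq0 i.succ
          simp only [hq, Fin.cons_succ] at this
          rcases mul_eq_zero.mp this with h | h
          · exact absurd h (ne_of_lt hM0)
          · exact h
      rw [hab.1]
      have : (∑ i, ‖b i‖ ^ 2) = 0 := Finset.sum_eq_zero fun i _ => by rw [hab.2 i]; ring
      rw [this]
      simp only [hq0]
      simp
  -- combine
  have hPnn := Real.sqrt_nonneg (‖a‖ ^ 2 + ∑ i, ‖b i‖ ^ 2)
  calc Real.sqrt (‖(Q x + ∑ i, (L i).adjoint (v i)) -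
          (Q y + ∑ i, (L i).adjoint (w i))‖ ^ 2 +
          ∑ i, ‖(Qi i (v i) - L i x) - (Qi i (w i) - L i y)‖ ^ 2)
      ≤ Real.sqrt (∑ j, (p j + q j) ^ 2) := step1
    _ ≤ Real.sqrt (∑ j, p j ^ 2) + Real.sqrt (∑ j, q j ^ 2) := minkowski_fin p q
    _ ≤ c * Real.sqrt (‖a‖ ^ 2 + ∑ i, ‖b i‖ ^ 2)
        + M * Real.sqrt (‖a‖ ^ 2 + ∑ i, ‖b i‖ ^ 2) := add_le_add step2 step3
    _ = (c + M) * Real.sqrt (‖x - y‖ ^ 2 + ∑ i, ‖v i - w i‖ ^ 2) := by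
        rw [← ha]
        simp only [hb]
        ring
end

section
/- Let f : H → ℝ be convex and differentiable with L-Lipschitz gradient, L > 0. Then ∇f is (1/L)-cocoercive: ⟨x − y, ∇f(x) − ∇f(y)⟩ ≥ (1/L)‖∇f(x) − ∇f(y)‖² for all x, y (Baillon–Haddad). -/
/-!
Convexity bounds `f` below by its tangent planes, and the `L`-Lipschitz gradient bounds it above
by the quadratic `f a + ⟪∇f a, b - a⟫ + L/2 ‖b - a‖²` (the descent lemma). Comparing the tangent
plane at `a` with the quadratic bound around `b` at the point `b - L⁻¹ (∇f b - ∇f a)` sharpens the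
tangent inequality to `f a + ⟪∇f a, b - a⟫ + ‖∇f b - ∇f a‖² / (2L) ≤ f b`; adding this to the same
inequality with `a` and `b` swapped gives cocoercivity.
-/

open scoped RealInnerProductSpace
open AffineMap Set

section

variable {H : Type*} [NormedAddCommGroup H] [InnerProductSpace ℝ H] [CompleteSpace H]
  {f : H → ℝ}

theorem HasGradientAt.hasDerivAt_comp_lineMap {f' a b : H} {t : ℝ}
    (h : HasGradientAt f f' (lineMap a b t)) :
    HasDerivAt (f ∘ lineMap a b) ⟪f', b - a⟫ t := by
  simpa using h.hasFDerivAt.comp_hasDerivAt t hasDerivAt_lineMap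

theorem ConvexOn.add_inner_le_of_hasGradientAt {s : Set H} {f' a b : H}
    (hf : ConvexOn ℝ s f) (ha : a ∈ s) (hb : b ∈ s) (h : HasGradientAt f f' a) :
    f a + ⟪f', b - a⟫ ≤ f b := by
  have hline := hf.comp_affineMap (lineMap a b : ℝ →ᵃ[ℝ] H)
  have hderiv : HasDerivAt (f ∘ lineMap a b) ⟪f', b - a⟫ (0 : ℝ) :=
    HasGradientAt.hasDerivAt_comp_lineMap (by simpa using h)
  have hslope := hline.le_slope_of_hasDerivAt (by simpa using ha) (by simpa using hb) zero_lt_one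
    hderiv
  simp only [slope_def_field, Function.comp_apply, lineMap_apply_one, lineMap_apply_zero, sub_zero,
    div_one] at hslope
  linarith

theorem le_add_inner_add_sq_of_lipschitz_gradient {g : H → H} {L : ℝ} {a b : H}
    (hgrad : ∀ x, HasGradientAt f (g x) x) (hlip : ∀ x, ‖g x - g a‖ ≤ L * ‖x - a‖) :
    f b ≤ f a + ⟪g a, b - a⟫ + L / 2 * ‖b - a‖ ^ 2 := by
  set φ : ℝ → ℝ := fun t ↦ f (lineMap a b t) - t * ⟪g a, b - a⟫ - L / 2 * t ^ 2 * ‖b - a‖ ^ 2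
  have hφ : ∀ t, HasDerivAt φ
      (⟪g (lineMap a b t), b - a⟫ - ⟪g a, b - a⟫ - L * t * ‖b - a‖ ^ 2) t := by
    intro t
    refine ((((hgrad (lineMap a b t)).hasDerivAt_comp_lineMap).sub
      ((hasDerivAt_id t).mul_const ⟪g a, b - a⟫)).sub
      (((hasDerivAt_pow 2 t).const_mul (L / 2)).mul_const (‖b - a‖ ^ 2))).congr_deriv ?_
    simp only [Nat.cast_ofNat, one_mul]
    ring
  have hanti : AntitoneOn φ (Ici 0) := by
    refine antitoneOn_of_hasDerivWithinAt_nonpos (convex_Ici 0)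
      (fun t _ ↦ (hφ t).continuousAt.continuousWithinAt)
      (fun t _ ↦ (hφ t).hasDerivWithinAt) fun t ht ↦ ?_
    rw [interior_Ici, mem_Ioi] at ht
    have hdist : ‖lineMap a b t - a‖ = t * ‖b - a‖ := by
      rw [← dist_eq_norm, dist_lineMap_left, Real.norm_of_nonneg ht.le, dist_eq_norm']
    rw [sub_nonpos]
    calc ⟪g (lineMap a b t), b - a⟫ - ⟪g a, b - a⟫
        = ⟪g (lineMap a b t) - g a, b - a⟫ := (inner_sub_left ..).symm
      _ ≤ ‖g (lineMap a b t) - g a‖ * ‖b - a‖ := real_inner_le_norm ..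
      _ ≤ L * (t * ‖b - a‖) * ‖b - a‖ := by
          gcongr; exact hdist ▸ hlip _
      _ = _ := by ring
  have hφ01 := hanti self_mem_Ici (mem_Ici.2 zero_le_one) zero_le_one
  simp only [φ, lineMap_apply_zero, lineMap_apply_one] at hφ01
  linarith

theorem ConvexOn.add_inner_add_sq_div_le {g : H → H} {L : ℝ} {b : H} (hf : ConvexOn ℝ univ f)
    (hL : 0 < L) (hgrad : ∀ x, HasGradientAt f (g x) x)
    (hlip : ∀ x, ‖g x - g b‖ ≤ L * ‖x - b‖) (a : H) :
    f a + ⟪g a, b - a⟫ + ‖g b - g a‖ ^ 2 / (2 * L) ≤ f b := by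
  set w := L⁻¹ • (g b - g a)
  have htangent := hf.add_inner_le_of_hasGradientAt (mem_univ a) (mem_univ (b - w)) (hgrad a)
  have hdescent : f (b - w) ≤ f b + ⟪g b, b - w - b⟫ + L / 2 * ‖b - w - b‖ ^ 2 :=
    le_add_inner_add_sq_of_lipschitz_gradient hgrad hlip
  have hinner : ⟪g b - g a, w⟫ = L⁻¹ * ‖g b - g a‖ ^ 2 := by
    rw [real_inner_smul_right, real_inner_self_eq_norm_sq]
  have hnorm : ‖w‖ ^ 2 = L⁻¹ ^ 2 * ‖g b - g a‖ ^ 2 := by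
    rw [norm_smul, mul_pow, Real.norm_of_nonneg (inv_nonneg.2 hL.le)]
  rw [sub_sub_cancel_left, inner_neg_right, norm_neg, hnorm] at hdescent
  rw [sub_right_comm, inner_sub_right] at htangent
  have hcoef : L / 2 * (L⁻¹ ^ 2 * ‖g b - g a‖ ^ 2) = ‖g b - g a‖ ^ 2 / (2 * L) := by
    field_simp
  rw [inner_sub_left] at hinner
  linear_combination htangent + hdescent - hinner + hcoef

end

theorem baillon_haddad {H : Type*} [NormedAddCommGroup H] [InnerProductSpace ℝ H]
    [CompleteSpace H] (f : H → ℝ) (g : H → H) (L : ℝ) (hL : 0 < L)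
    (hconv : ConvexOn ℝ Set.univ f)
    (hgrad : ∀ x, HasGradientAt f (g x) x)
    (hlip : ∀ x y : H, ‖g x - g y‖ ≤ L * ‖x - y‖) :
    ∀ x y : H, ⟪x - y, g x - g y⟫ ≥ (1 / L) * ‖g x - g y‖ ^ 2 := by
  intro x y
  have hxy := hconv.add_inner_add_sq_div_le hL hgrad (hlip · y) x
  have hyx := hconv.add_inner_add_sq_div_le hL hgrad (hlip · x) y
  rw [norm_sub_rev] at hxy
  have hsum : ⟪x - y, g x - g y⟫ = -(⟪g x, y - x⟫ + ⟪g y, x - y⟫) := by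
    simp only [inner_sub_left, inner_sub_right, real_inner_comm]
    ring
  rw [hsum, ge_iff_le]
  linear_combination hxy + hyx
end
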